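/- arXiv:2112.13456 — 3 statements merged into one kernel-verified Lean document; each statement's English description precedes it below -/
import Mathlib

section
/- Suppose b : {1,...,n} → {1,...,n} satisfies b(i) ≥ i for all i. Then the set {σ ∈ Sₙ : σ(i) ≤ b(i) for all i} is nonempty, and its cardinality equals ∏_{l=1}^n N_l where N_l = #{i : b(i) ≥ l} − (n − l). -/
open Finset

lemma count_inj {α : Type*} [DecidableEq α] [Fintype α] :
    ∀ (n : ℕ) (S : Fin n → Finset α), Antitone S →
    ((Finset.univ.filter
        (fun f : Fin n → α => Function.Injective f ∧ ∀ v, f v ∈ S v)).card)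
      = ∏ v : Fin n, ((S v).card - (n - 1 - v.val)) := by
  intro n
  induction n with
  | zero =>
    intro S _
    rw [Finset.filter_true_of_mem (fun f _ => ⟨fun a => a.elim0, fun v => v.elim0⟩)]
    simp
  | succ n ih =>
    intro S hS
    have hset : (univ.filter
          (fun f : Fin (n+1) → α => Function.Injective f ∧ ∀ v, f v ∈ S v))
        = (S (Fin.last n)).biUnion (fun x =>
            (univ.filter (fun g : Fin n → α =>
              Function.Injective g ∧ ∀ v, g v ∈ (S v.castSucc).erase x)).image
              (fun g : Fin n → α => (Fin.snoc g x : Fin (n+1) → α))) := by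
      ext f
      simp only [mem_filter, mem_univ, true_and, mem_biUnion, mem_image]
      constructor
      · rintro ⟨hinj, hmem⟩
        refine ⟨f (Fin.last n), hmem _, f ∘ Fin.castSucc, ⟨?_, ?_⟩, ?_⟩
        · exact hinj.comp (Fin.castSucc_injective n)
        · intro v
          refine Finset.mem_erase.2 ⟨?_, hmem _⟩
          intro h
          exact absurd (hinj h) (Fin.castSucc_lt_last v).ne
        · funext v
          refine Fin.lastCases ?_ ?_ v
          · simp
          · intro w; simp
      · rintro ⟨x, hx, g, ⟨hginj, hgmem⟩, rfl⟩
        have hgx : ∀ v, g v ≠ x := fun v => Finset.ne_of_mem_erase (hgmem v)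
        constructor
        · intro a c hac
          rcases Fin.eq_castSucc_or_eq_last a with ⟨a', rfl⟩ | rfl <;>
            rcases Fin.eq_castSucc_or_eq_last c with ⟨c', rfl⟩ | rfl <;>
              simp only [Fin.snoc_castSucc, Fin.snoc_last] at hac
          · exact congrArg Fin.castSucc (hginj hac)
          · exact absurd hac (hgx a')
          · exact absurd hac.symm (hgx c')
          · rfl
        · intro v
          refine Fin.lastCases ?_ ?_ v
          · simpa using hx
          · intro w
            simpa using Finset.mem_of_mem_erase (hgmem w)
    rw [hset, Finset.card_biUnion]
    · have hterm : ∀ x ∈ S (Fin.last n),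
          ((univ.filter (fun g : Fin n → α =>
            Function.Injective g ∧ ∀ v, g v ∈ (S v.castSucc).erase x)).image
              (fun g : Fin n → α => (Fin.snoc g x : Fin (n+1) → α))).card
          = ∏ v : Fin n, ((S v.castSucc).card - 1 - (n - 1 - v.val)) := by
        intro x hx
        have hsnoc : Function.Injective (fun g : Fin n → α => (Fin.snoc g x : Fin (n+1) → α)) := by
          intro g g' h
          funext v
          have := congrFun h v.castSucc
          simpa using this
        rw [Finset.card_image_of_injective _ hsnoc]
        have hanti : Antitone (fun v : Fin n => (S v.castSucc).erase x) := by
          intro v w hvw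
          exact Finset.erase_subset_erase x (hS (Fin.castSucc_le_castSucc_iff.2 hvw))
        rw [ih _ hanti]
        refine Finset.prod_congr rfl fun v _ => ?_
        have hmemx : x ∈ S v.castSucc := hS (Fin.le_last _) hx
        rw [Finset.card_erase_of_mem hmemx]
      rw [Finset.sum_congr rfl hterm, Finset.sum_const, smul_eq_mul,
        Fin.prod_univ_castSucc]
      have hlast : (S (Fin.last n)).card - (n + 1 - 1 - (Fin.last n).val)
          = (S (Fin.last n)).card := by
        simp
      rw [hlast, mul_comm]
      congr 1
      refine Finset.prod_congr rfl fun v _ => ?_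
      have hv : v.val < n := v.isLt
      have : (Fin.castSucc v).val = v.val := rfl
      omega
    · intro x hx y hy hxy
      simp only [Finset.disjoint_left]
      intro f hf hg
      simp only [mem_image, mem_filter] at hf hg
      obtain ⟨g1, _, rfl⟩ := hf
      obtain ⟨g2, _, h2⟩ := hg
      apply hxy
      have := congrFun h2 (Fin.last n)
      simpa using this.symm

theorem card_restricted_perms (n : ℕ) (hn : 1 ≤ n) (b : Fin n → Fin n)
    (hb : ∀ i, i ≤ b i) :
    (Finset.univ.filter (fun σ : Equiv.Perm (Fin n) => ∀ i, σ i ≤ b i)).Nonempty ∧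
    ((Finset.univ.filter (fun σ : Equiv.Perm (Fin n) => ∀ i, σ i ≤ b i)).card : ℤ) =
      ∏ l : Fin n,
        (((Finset.univ.filter (fun i : Fin n => l ≤ b i)).card : ℤ)
          - ((n : ℤ) - 1 - (l.val : ℤ))) := by
  constructor
  · exact ⟨Equiv.refl _, by simp [hb]⟩
  · obtain ⟨T, hT⟩ : ∃ T : Fin n → Finset (Fin n),
        T = fun v => univ.filter (fun i => v ≤ b i) := ⟨_, rfl⟩
    have hanti : Antitone T := by
      intro v w hvw i hi
      simp only [hT, mem_filter, mem_univ, true_and] at hi ⊢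
      exact le_trans hvw hi
    have key := count_inj n T hanti
    have hcard : (univ.filter (fun σ : Equiv.Perm (Fin n) => ∀ i, σ i ≤ b i)).card
        = (univ.filter (fun f : Fin n → Fin n =>
            Function.Injective f ∧ ∀ v, f v ∈ T v)).card := by
      apply Finset.card_bij (fun (σ : Equiv.Perm (Fin n)) _ => (⇑σ⁻¹ : Fin n → Fin n))
      · intro σ hσ
        simp only [mem_filter, mem_univ, true_and] at hσ ⊢
        refine ⟨σ⁻¹.injective, fun v => ?_⟩
        simp only [hT, mem_filter, mem_univ, true_and]
        have := hσ (σ⁻¹ v)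
        simpa using this
      · intro σ1 h1 σ2 h2 h
        have h' : σ1⁻¹ = σ2⁻¹ := Equiv.coe_fn_injective h
        simpa using congrArg Inv.inv h'
      · intro f hf
        simp only [mem_filter, mem_univ, true_and] at hf
        obtain ⟨hinj, hmem⟩ := hf
        have hbij : Function.Bijective f :=
          (Fintype.bijective_iff_injective_and_card f).2 ⟨hinj, rfl⟩
        refine ⟨(Equiv.ofBijective f hbij).symm, ?_, ?_⟩
        · simp only [mem_filter, mem_univ, true_and]
          intro i
          have h1 : f ((Equiv.ofBijective f hbij).symm i) = i :=
            (Equiv.ofBijective f hbij).apply_symm_apply i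
          have h2 := hmem ((Equiv.ofBijective f hbij).symm i)
          simp only [hT, mem_filter, mem_univ, true_and] at h2
          rwa [h1] at h2
        · show ⇑((Equiv.ofBijective f hbij).symm)⁻¹ = f
          funext v
          simp [Equiv.Perm.inv_def]
    rw [show (Finset.univ.filter (fun σ : Equiv.Perm (Fin n) => ∀ i, σ i ≤ b i)).card
        = (univ.filter (fun σ : Equiv.Perm (Fin n) => ∀ i, σ i ≤ b i)).card from rfl,
      hcard, key, Nat.cast_prod]
    refine Finset.prod_congr rfl ?_
    intro l _
    have hsub : univ.filter (fun i : Fin n => l ≤ i) ⊆ T l := by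
      intro i hi
      simp only [hT, mem_filter, mem_univ, true_and] at hi ⊢
      exact le_trans hi (hb i)
    have hIci : (univ.filter (fun i : Fin n => l ≤ i)) = Finset.Ici l := by
      ext i; simp
    have hcardIci : (Finset.Ici l).card = n - l.val := by
      simp [Fin.card_Ici]
    have hge : n - 1 - l.val ≤ (T l).card := by
      have h2 := Finset.card_le_card hsub
      rw [hIci, hcardIci] at h2
      exact le_trans (Nat.sub_le_sub_right (Nat.sub_le n 1) l.val) h2
    rw [Nat.cast_sub hge]
    have hl : l.val ≤ n - 1 := Nat.le_pred_of_lt l.isLt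
    rw [Nat.cast_sub hl, Nat.cast_sub hn, Nat.cast_one, hT]
end

section
/- For b : {1,...,n} → {1,...,n} with b(i) ≥ i for all i and β₂ ≥ 0, the normalizing constant of the twisted measure ℚ_{b,β₂}(τ) ∝ e^{β₂ C(τ)} 1[τ(i) ≤ b(i) ∀i] equals ∏_{l=1}^n (e^{β₂} + N_l − 1), i.e., ∑_{τ ∈ Sₙ: τ(i) ≤ b(i) ∀i} e^{β₂ C(τ)} = ∏_{l=1}^n (e^{β₂} + N_l − 1), where C(τ) is the number of cycles of τ and N_l = #{i : b(i) ≥ l} − (n − l). -/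
/-- Number of cycles of a permutation, counting fixed points as cycles. -/
def numCycles {n : ℕ} (τ : Equiv.Perm (Fin n)) : ℕ :=
  τ.cycleType.card + (Finset.univ.filter fun x => τ x = x).card

/-!
Induct on `n` by removing the top value `m`. If `τ i ≤ b i` for all `i`, the point
`j = τ⁻¹ m` satisfies `b j ≥ m`, and `τ * swap j m` fixes `m`, so it is a permutation `σ` of the
smaller set, again bounded by `b`; conversely every such pair `(j, σ)` gives back a bounded `τ`.
Right multiplication by `swap j m` takes `m` out of the cycle of `j`, so `C(τ) = C(σ)` for
`j ≠ m`, while `C(τ) = C(σ) + 1` for `j = m`. Summing over `j` contributes the factor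
`x + #{j | b j ≥ m} - 1` (with `x = e^{β₂}`), and induction produces the product.
-/

open Equiv Equiv.Perm Finset

theorem Fin.card_filter_univ_castSucc {n : ℕ} (p : Fin (n + 1) → Prop) [DecidablePred p] :
    #{x | p x} = #{x : Fin n | p x.castSucc} + if p (Fin.last n) then 1 else 0 := by
  simp only [card_filter, Fin.sum_univ_castSucc]

namespace Equiv.Perm

theorem SameCycle.of_forall_sameCycle_apply {α : Type*} [Finite α] {f c : Perm α}
    (h : ∀ z, f.SameCycle z (c z)) {x y : α} (hxy : c.SameCycle x y) : f.SameCycle x y := by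
  obtain ⟨k, rfl⟩ := hxy.exists_nat_pow_eq
  clear hxy
  induction k with
  | zero => exact SameCycle.refl _ _
  | succ k ih => rw [pow_succ', mul_apply]; exact ih.trans (h _)

theorem exists_extendDomain_eq {α β : Type*} {p : β → Prop} [DecidablePred p]
    (f : α ≃ Subtype p) {τ : Perm β} (h : ∀ x, ¬p x → τ x = x) :
    ∃ σ : Perm α, σ.extendDomain f = τ := by
  have hp : ∀ x, p (τ x) ↔ p x := fun x => by
    by_cases hx : p x
    · refine iff_of_true (by_contra fun hτx => ?_) hx
      exact hτx (by rwa [τ.injective (h _ hτx)])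
    · rw [h x hx]
  refine ⟨f.symm.permCongr (τ.subtypePerm hp), Equiv.ext fun x => ?_⟩
  by_cases hx : p x
  · simp [extendDomain_apply_subtype _ _ hx, permCongr_apply]
  · simp [extendDomain_apply_not_subtype _ _ hx, h x hx]

section Swap

variable {α : Type*} [Fintype α] [DecidableEq α]

theorem IsCycle.mul_swap {c : Perm α} (hc : c.IsCycle) {a b : α} (ha : c a ≠ a)
    (hb : c b = b) : (c * swap a b).IsCycle := by
  have hba : b ≠ a := fun h => ha (h ▸ hb)
  -- `c * swap a b` runs `a ↦ b ↦ c a`, so each step of `c` stays inside one of its cycles.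
  have step : ∀ z, (c * swap a b).SameCycle z (c z) := by
    intro z
    by_cases hza : z = a
    · subst hza
      exact ⟨2, by simp [pow_two, hb]⟩
    by_cases hzb : z = b
    · rw [hzb, hb]
    · exact ⟨1, by simp [swap_apply_of_ne_of_ne hza hzb]⟩
  refine ⟨a, by simpa [hb] using hba, fun y hy => ?_⟩
  by_cases hcy : c y = y
  · obtain rfl : y = b := by
      by_contra hyb
      have hya : y ≠ a := fun h => ha (h ▸ hcy)
      exact hy (by rw [mul_apply, swap_apply_of_ne_of_ne hya hyb, hcy])
    exact ⟨1, by simp [hb]⟩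
  · exact SameCycle.of_forall_sameCycle_apply step (hc.sameCycle ha hcy)

theorem card_cycleType_mul_swap {g : Perm α} {a b : α} (hab : a ≠ b) (hb : g b = b) :
    Multiset.card (g * swap a b).cycleType =
      Multiset.card g.cycleType + if g a = a then 1 else 0 := by
  by_cases ha : g a = a
  · have hdisj : Disjoint g (swap a b) := fun x => by
      rcases eq_or_ne x a with rfl | hxa
      · exact Or.inl ha
      rcases eq_or_ne x b with rfl | hxb
      · exact Or.inl hb
      · exact Or.inr (swap_apply_of_ne_of_ne hxa hxb)
    rw [hdisj.cycleType_mul, (isCycle_swap hab).cycleType, if_pos ha]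
    simp
  -- Split off the cycle `c` of `a`: `g = (g * c⁻¹) * c` and
  -- `g * swap a b = (g * c⁻¹) * (c * swap a b)`, both products of disjoint permutations.
  set c := g.cycleOf a
  have hc : c.IsCycle := isCycle_cycleOf g ha
  have hca : c a ≠ a := by rwa [cycleOf_apply_self]
  have hcb : c b = b := by rw [cycleOf_apply]; split_ifs <;> simp [hb]
  have hdc : Disjoint (g * c⁻¹) c := disjoint_mul_inv_of_mem_cycleFactorsFinset
    (cycleOf_mem_cycleFactorsFinset_iff.mpr (mem_support.mpr ha))
  have hdisj : Disjoint (g * c⁻¹) (c * swap a b) := fun x => by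
    by_cases hxa : x = a
    · exact Or.inl (by simpa [hxa, hca] using hdc a)
    by_cases hxb : x = b
    · exact Or.inl (by rw [hxb, mul_apply, inv_eq_iff_eq.mpr hcb.symm, hb])
    · exact (hdc x).imp_right fun h => by rw [mul_apply, swap_apply_of_ne_of_ne hxa hxb, h]
  have card_mul_cycle : ∀ h : Perm α, Disjoint (g * c⁻¹) h → h.IsCycle →
      Multiset.card (g * c⁻¹ * h).cycleType = Multiset.card (g * c⁻¹).cycleType + 1 :=
    fun h hd hh => by rw [hd.cycleType_mul, hh.cycleType]; simp
  have hg := card_mul_cycle c hdc hc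
  rw [inv_mul_cancel_right] at hg
  rw [show g * swap a b = g * c⁻¹ * (c * swap a b) by group,
    card_mul_cycle _ hdisj (hc.mul_swap hca hcb), hg, if_neg ha]

theorem filter_mul_swap_apply_eq_self {g : Perm α} {a b : α} (hab : a ≠ b) (hb : g b = b) :
    univ.filter (fun x => (g * swap a b) x = x) =
      ((univ.filter fun x => g x = x).erase a).erase b := by
  ext x
  simp only [mem_filter, mem_univ, true_and, mem_erase]
  rw [mul_apply]
  rcases eq_or_ne x a with rfl | hxa
  · simp [hb, Ne.symm hab]
  rcases eq_or_ne x b with rfl | hxb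
  · simpa [hxa] using hb ▸ g.injective.ne hab
  · simp [swap_apply_of_ne_of_ne hxa hxb, hxa, hxb]

end Swap

variable {m : ℕ}

def extendCastSucc (σ : Perm (Fin m)) : Perm (Fin (m + 1)) :=
  σ.extendDomain (Fin.castLEquiv m.le_succ)

@[simp]
theorem extendCastSucc_castSucc (σ : Perm (Fin m)) (i : Fin m) :
    σ.extendCastSucc i.castSucc = (σ i).castSucc :=
  extendDomain_apply_image σ _ i

@[simp]
theorem extendCastSucc_last (σ : Perm (Fin m)) : σ.extendCastSucc (Fin.last m) = Fin.last m :=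
  extendDomain_apply_not_subtype σ _ (by simp)

theorem extendCastSucc_injective : Function.Injective (extendCastSucc (m := m)) :=
  extendDomainHom_injective _

theorem exists_extendCastSucc_eq {τ : Perm (Fin (m + 1))} (h : τ (Fin.last m) = Fin.last m) :
    ∃ σ : Perm (Fin m), σ.extendCastSucc = τ :=
  exists_extendDomain_eq _ fun x hx => by
    rwa [show x = Fin.last m from Fin.ext (by rw [Fin.val_last]; omega)]

end Equiv.Perm

theorem numCycles_mul_swap {m : ℕ} {g : Perm (Fin m)} {a b : Fin m} (hab : a ≠ b)
    (hb : g b = b) : numCycles (g * swap a b) + 1 = numCycles g := by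
  have hbF : b ∈ (univ.filter fun x => g x = x).erase a := by simp [hb, Ne.symm hab]
  have hF := card_pos.mpr ⟨b, hbF⟩
  unfold numCycles
  rw [card_cycleType_mul_swap hab hb, filter_mul_swap_apply_eq_self hab hb,
    card_erase_of_mem hbF]
  rw [card_erase_eq_ite] at hF ⊢
  by_cases ha : g a = a <;> simp only [ha, if_true, if_false, mem_filter, mem_univ, true_and]
    at hF ⊢ <;> omega

theorem numCycles_extendCastSucc {m : ℕ} (σ : Perm (Fin m)) :
    numCycles σ.extendCastSucc = numCycles σ + 1 := by
  unfold numCycles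
  rw [Fin.card_filter_univ_castSucc]
  simp only [extendCastSucc_castSucc, extendCastSucc_last, Fin.castSucc_inj, if_true]
  rw [extendCastSucc, cycleType_extendDomain, add_assoc]

section Counting

open Fin

variable {m : ℕ}

theorem bijective_extendCastSucc_mul_swap (m : ℕ) :
    Function.Bijective fun p : Fin (m + 1) × Perm (Fin m) =>
      p.2.extendCastSucc * swap p.1 (last m) := by
  refine ⟨fun ⟨j, σ⟩ ⟨j', σ'⟩ h => ?_, fun τ => ?_⟩
  · simp only at h
    obtain rfl : j = j' := (σ'.extendCastSucc * swap j' (last m)).injective <| by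
      nth_rw 1 [← h]
      simp
    exact Prod.ext rfl (extendCastSucc_injective (mul_right_cancel h))
  · obtain ⟨σ, hσ⟩ := exists_extendCastSucc_eq (τ := τ * swap (τ⁻¹ (last m)) (last m))
      (by simp)
    exact ⟨(τ⁻¹ (last m), σ), by simp [hσ, mul_assoc]⟩

theorem numCycles_extendCastSucc_mul_swap (σ : Perm (Fin m)) (j : Fin (m + 1)) :
    numCycles (σ.extendCastSucc * swap j (last m)) =
      numCycles σ + if j = last m then 1 else 0 := by
  by_cases hj : j = last m
  · rw [hj, swap_self, ← Perm.one_def, mul_one, numCycles_extendCastSucc, if_pos rfl]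
  · have := numCycles_mul_swap hj (extendCastSucc_last σ)
    rw [numCycles_extendCastSucc] at this
    rw [if_neg hj]
    omega

theorem extendCastSucc_mul_swap_le_iff {b : Fin (m + 1) → ℕ} (hb : m ≤ b (last m))
    (σ : Perm (Fin m)) (j : Fin (m + 1)) :
    (∀ i, ((σ.extendCastSucc * swap j (last m)) i : ℕ) ≤ b i) ↔
      m ≤ b j ∧ ∀ i, (σ i : ℕ) ≤ b i.castSucc := by
  rw [← (swap j (last m)).forall_congr_right, forall_fin_succ']
  simp only [mul_apply, swap_apply_self, swap_apply_left, swap_apply_right, extendCastSucc_last,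
    extendCastSucc_castSucc, val_last, val_castSucc, and_comm (a := ∀ _, _)]
  refine and_congr_right fun hj => forall_congr' fun i => ?_
  by_cases hij : i.castSucc = j
  · have hσi := (σ i).isLt
    rw [← hij, swap_apply_left]
    rw [← hij] at hj
    exact iff_of_true (by omega) (by omega)
  · rw [swap_apply_of_ne_of_ne hij (castSucc_ne_last i)]

-- The bounds are `ℕ`-valued so that restricting `b` to `Fin m` needs no truncation.
theorem sum_pow_numCycles_filter_le {R : Type*} [CommRing R] (x : R) (b : Fin m → ℕ)
    (hb : ∀ i : Fin m, (i : ℕ) ≤ b i) :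
    ∑ τ ∈ univ.filter (fun τ : Perm (Fin m) => ∀ i, (τ i : ℕ) ≤ b i), x ^ numCycles τ =
      ∏ l : Fin m, (x + #{i | (l : ℕ) ≤ b i} + l - m) := by
  induction m with
  | zero => simp [numCycles]
  | succ m ih =>
    have hlast : m ≤ b (last m) := by simpa using hb (last m)
    set A := univ.filter fun j : Fin (m + 1) => m ≤ b j
    have hA : last m ∈ A := by simpa [A] using hlast
    have coeff : ∑ j ∈ A, (if j = last m then x else 1) = x + #A - 1 := by
      rw [sum_ite, filter_eq' A, if_pos hA, sum_singleton, filter_ne' A, Finset.sum_const,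
        card_erase_of_mem hA, nsmul_one, Nat.cast_sub (card_pos.mpr ⟨_, hA⟩)]
      push_cast
      ring
    have factor (l : Fin m) :
        (x + #{i | (l.castSucc : ℕ) ≤ b i} + (l.castSucc : ℕ) - (m + 1 : ℕ) : R) =
          x + #{i : Fin m | (l : ℕ) ≤ b i.castSucc} + l - m := by
      rw [Fin.card_filter_univ_castSucc, if_pos (by rw [val_castSucc]; omega)]
      push_cast [val_castSucc]
      ring
    calc _ = ∑ p ∈ A ×ˢ univ.filter (fun σ : Perm (Fin m) => ∀ i, (σ i : ℕ) ≤ b i.castSucc),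
            x ^ numCycles (p.2.extendCastSucc * swap p.1 (last m)) :=
          (sum_equiv (.ofBijective _ (bijective_extendCastSucc_mul_swap m))
            (fun ⟨j, σ⟩ => by
              simp only [A, mem_product, mem_filter, mem_univ, true_and, ofBijective_apply]
              exact (extendCastSucc_mul_swap_le_iff hlast σ j).symm) fun _ _ => rfl).symm
      _ = (∑ j ∈ A, if j = last m then x else 1) *
            ∑ σ ∈ univ.filter (fun σ : Perm (Fin m) => ∀ i, (σ i : ℕ) ≤ b i.castSucc),
              x ^ numCycles σ := by
          rw [sum_product, sum_mul]
          refine sum_congr rfl fun j _ => ?_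
          rw [mul_sum]
          refine sum_congr rfl fun σ _ => ?_
          rw [numCycles_extendCastSucc_mul_swap, pow_add]
          split_ifs <;> simp [mul_comm]
      _ = _ := by
          rw [coeff, ih _ fun i => by simpa using hb i.castSucc, prod_univ_castSucc, mul_comm]
          congr 1
          · exact prod_congr rfl fun l _ => (factor l).symm
          · push_cast [A, val_last]
            ring

end Counting

theorem twisted_normalizing_constant_general (n : ℕ) (β₂ : ℝ)
    (b : Fin n → Fin n) (hb : ∀ i, i ≤ b i) :
    ∑ τ ∈ Finset.univ.filter (fun τ : Equiv.Perm (Fin n) => ∀ i, τ i ≤ b i),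
        Real.exp (β₂ * (numCycles τ : ℝ)) =
      ∏ l : Fin n,
        (Real.exp β₂
          + (((Finset.univ.filter (fun i : Fin n => l ≤ b i)).card : ℝ)
              - ((n : ℝ) - 1 - (l.val : ℝ)))
          - 1) := by
  have key := sum_pow_numCycles_filter_le (Real.exp β₂) (fun i => b i) hb
  simp only [← Fin.le_def] at key
  calc _ = ∑ τ ∈ univ.filter (fun τ : Perm (Fin n) => ∀ i, τ i ≤ b i),
          Real.exp β₂ ^ numCycles τ :=
        sum_congr rfl fun τ _ => by rw [mul_comm, Real.exp_nat_mul]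
    _ = _ := key
    _ = _ := prod_congr rfl fun l _ => by ring

theorem twisted_normalizing_constant (n : ℕ) (hn : 1 ≤ n) (β₂ : ℝ) (hβ₂ : 0 ≤ β₂)
    (b : Fin n → Fin n) (hb : ∀ i, i ≤ b i) :
    ∑ τ ∈ Finset.univ.filter (fun τ : Equiv.Perm (Fin n) => ∀ i, τ i ≤ b i),
        Real.exp (β₂ * (numCycles τ : ℝ)) =
      ∏ l : Fin n,
        (Real.exp β₂
          + (((Finset.univ.filter (fun i : Fin n => l ≤ b i)).card : ℝ)
              - ((n : ℝ) - 1 - (l.val : ℝ)))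
          - 1) :=
  twisted_normalizing_constant_general n β₂ b hb
end

section
/- Let B be a random variable on {1,...,n} constructed as follows: u is uniform on [0, e^{−2β(m−j)₊}] for given j ∈ {1,...,n}, m ∈ {1,...,n} with m ≤ j and β > 0, and B = min(⌊j − log(u)/(2β)⌋, n). Then for k ∈ {j,...,n−1}, P(B = k) = (1 − e^{−2β}) e^{−2β(k−j)}, and P(B = n) = e^{−2β(n−j)}. -/
open MeasureTheory

theorem hitAndRun_L1_auxiliary_law (n j m : ℕ) (hj : 1 ≤ j) (hjn : j ≤ n)
    (hm : 1 ≤ m) (hmj : m ≤ j) (β : ℝ) (hβ : 0 < β) :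
    (∀ k : ℕ, j ≤ k → k ≤ n - 1 →
      volume {u : ℝ | u ∈ Set.Ioc (0 : ℝ) (Real.exp (-(2 * β) * max ((m : ℝ) - (j : ℝ)) 0)) ∧
          min ⌊(j : ℝ) - Real.log u / (2 * β)⌋ (n : ℤ) = (k : ℤ)} =
        ENNReal.ofReal ((1 - Real.exp (-(2 * β))) * Real.exp (-(2 * β) * ((k : ℝ) - (j : ℝ))))) ∧
    volume {u : ℝ | u ∈ Set.Ioc (0 : ℝ) (Real.exp (-(2 * β) * max ((m : ℝ) - (j : ℝ)) 0)) ∧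
          min ⌊(j : ℝ) - Real.log u / (2 * β)⌋ (n : ℤ) = (n : ℤ)} =
      ENNReal.ofReal (Real.exp (-(2 * β) * ((n : ℝ) - (j : ℝ)))) := by
  have hmj' : (m : ℝ) ≤ (j : ℝ) := Nat.cast_le.mpr hmj
  have hmax : max ((m : ℝ) - (j : ℝ)) 0 = 0 := max_eq_right (by linarith)
  have h2β : (0 : ℝ) < 2 * β := by linarith
  constructor
  · intro k hk hkn
    have hkn' : k < n := by omega
    have hjk : (j : ℝ) ≤ (k : ℝ) := Nat.cast_le.mpr hk
    have hset : {u : ℝ | u ∈ Set.Ioc (0 : ℝ) (Real.exp (-(2 * β) * max ((m : ℝ) - (j : ℝ)) 0)) ∧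
          min ⌊(j : ℝ) - Real.log u / (2 * β)⌋ (n : ℤ) = (k : ℤ)} =
        Set.Ioc (Real.exp (-(2 * β) * ((k : ℝ) + 1 - (j : ℝ))))
          (Real.exp (-(2 * β) * ((k : ℝ) - (j : ℝ)))) := by
      ext u
      simp only [hmax, mul_zero, Real.exp_zero, Set.mem_Ioc, Set.mem_setOf_eq]
      constructor
      · rintro ⟨⟨hu0, hu1⟩, hmin⟩
        have hfloor : ⌊(j : ℝ) - Real.log u / (2 * β)⌋ = (k : ℤ) := by
          rcases min_eq_iff.mp hmin with h | h
          · exact h.1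
          · exfalso
            have : n = k := Nat.cast_injective h.1
            omega
        rw [Int.floor_eq_iff] at hfloor
        obtain ⟨h1, h2⟩ := hfloor
        push_cast at h1 h2
        have hlog1 : Real.log u ≤ -(2 * β) * ((k : ℝ) - (j : ℝ)) := by
          have := (div_le_iff₀ h2β).mp (by linarith : Real.log u / (2 * β) ≤ (j : ℝ) - (k : ℝ))
          linarith [this]
        have hlog2 : -(2 * β) * ((k : ℝ) + 1 - (j : ℝ)) < Real.log u := by
          have h3 : (j : ℝ) - ((k : ℝ) + 1) < Real.log u / (2 * β) := by linarith
          have := (lt_div_iff₀ h2β).mp h3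
          nlinarith [this]
        constructor
        · calc Real.exp (-(2 * β) * ((k : ℝ) + 1 - (j : ℝ))) < Real.exp (Real.log u) :=
                Real.exp_lt_exp.mpr hlog2
            _ = u := Real.exp_log hu0
        · calc u = Real.exp (Real.log u) := (Real.exp_log hu0).symm
            _ ≤ Real.exp (-(2 * β) * ((k : ℝ) - (j : ℝ))) := Real.exp_le_exp.mpr hlog1
      · rintro ⟨hlo, hhi⟩
        have hu0 : 0 < u := lt_trans (Real.exp_pos _) hlo
        have hu1 : u ≤ 1 := by
          calc u ≤ Real.exp (-(2 * β) * ((k : ℝ) - (j : ℝ))) := hhi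
            _ ≤ Real.exp 0 := Real.exp_le_exp.mpr (by nlinarith)
            _ = 1 := Real.exp_zero
        have hlog1 : Real.log u ≤ -(2 * β) * ((k : ℝ) - (j : ℝ)) :=
          (Real.log_le_iff_le_exp hu0).mpr hhi
        have hlog2 : -(2 * β) * ((k : ℝ) + 1 - (j : ℝ)) < Real.log u := by
          have := Real.exp_log hu0
          calc -(2 * β) * ((k : ℝ) + 1 - (j : ℝ)) = Real.log (Real.exp (-(2 * β) * ((k : ℝ) + 1 - (j : ℝ)))) := (Real.log_exp _).symm
            _ < Real.log u := Real.log_lt_log (Real.exp_pos _) hlo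
        have hfloor : ⌊(j : ℝ) - Real.log u / (2 * β)⌋ = (k : ℤ) := by
          rw [Int.floor_eq_iff]
          push_cast
          constructor
          · have : Real.log u / (2 * β) ≤ (j : ℝ) - (k : ℝ) :=
              (div_le_iff₀ h2β).mpr (by nlinarith)
            linarith
          · have : (j : ℝ) - ((k : ℝ) + 1) < Real.log u / (2 * β) :=
              (lt_div_iff₀ h2β).mpr (by nlinarith)
            linarith
        refine ⟨⟨hu0, hu1⟩, ?_⟩
        rw [hfloor]
        exact min_eq_left (by exact_mod_cast hkn'.le)
    rw [hset, Real.volume_Ioc]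
    congr 1
    rw [show -(2 * β) * ((k : ℝ) + 1 - (j : ℝ)) = -(2 * β) + -(2 * β) * ((k : ℝ) - (j : ℝ)) by ring,
      Real.exp_add]
    ring
  · have hjn' : (j : ℝ) ≤ (n : ℝ) := Nat.cast_le.mpr hjn
    have hset : {u : ℝ | u ∈ Set.Ioc (0 : ℝ) (Real.exp (-(2 * β) * max ((m : ℝ) - (j : ℝ)) 0)) ∧
          min ⌊(j : ℝ) - Real.log u / (2 * β)⌋ (n : ℤ) = (n : ℤ)} =
        Set.Ioc (0 : ℝ) (Real.exp (-(2 * β) * ((n : ℝ) - (j : ℝ)))) := by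
      ext u
      simp only [hmax, mul_zero, Real.exp_zero, Set.mem_Ioc, Set.mem_setOf_eq]
      constructor
      · rintro ⟨⟨hu0, hu1⟩, hmin⟩
        have hle : (n : ℤ) ≤ ⌊(j : ℝ) - Real.log u / (2 * β)⌋ := by
          have := min_le_left ⌊(j : ℝ) - Real.log u / (2 * β)⌋ (n : ℤ)
          omega
        have hle' : (n : ℝ) ≤ (j : ℝ) - Real.log u / (2 * β) := by
          have := Int.le_floor.mp hle
          exact_mod_cast this
        have hlog : Real.log u ≤ -(2 * β) * ((n : ℝ) - (j : ℝ)) := by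
          have : Real.log u / (2 * β) ≤ (j : ℝ) - (n : ℝ) := by linarith
          have := (div_le_iff₀ h2β).mp this
          nlinarith [this]
        refine ⟨hu0, ?_⟩
        calc u = Real.exp (Real.log u) := (Real.exp_log hu0).symm
          _ ≤ _ := Real.exp_le_exp.mpr hlog
      · rintro ⟨hu0, hhi⟩
        have hu1 : u ≤ 1 := by
          calc u ≤ Real.exp (-(2 * β) * ((n : ℝ) - (j : ℝ))) := hhi
            _ ≤ Real.exp 0 := Real.exp_le_exp.mpr (by nlinarith)
            _ = 1 := Real.exp_zero
        have hlog : Real.log u ≤ -(2 * β) * ((n : ℝ) - (j : ℝ)) :=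
          (Real.log_le_iff_le_exp hu0).mpr hhi
        have hle' : (n : ℝ) ≤ (j : ℝ) - Real.log u / (2 * β) := by
          have : Real.log u / (2 * β) ≤ (j : ℝ) - (n : ℝ) :=
            (div_le_iff₀ h2β).mpr (by nlinarith)
          linarith
        have hle : (n : ℤ) ≤ ⌊(j : ℝ) - Real.log u / (2 * β)⌋ := by
          rw [Int.le_floor]
          exact_mod_cast hle'
        exact ⟨⟨hu0, hu1⟩, min_eq_right hle⟩
    rw [hset, Real.volume_Ioc]
    congr 1
    ring
end
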